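/- arXiv:1004.4401 — 3 statements merged into one kernel-verified Lean document; each statement's English description precedes it below -/
import Mathlib

section
/- Let k ≥ 2 be an integer, A = [[1,k],[0,1]], B = [[1,0],[-k,1]] in SL₂(ℤ), and let q₁,…,qₙ be positive integers. Then the trace of the product A^{q₁}·B^{-q₁}·…·A^{qₙ}·B^{-qₙ} has absolute value strictly greater than 2, i.e. the product is a hyperbolic element of SL₂(ℝ). -/
/-- Positivity predicate on 2×2 integer matrices. -/
def stmtP (M : Matrix (Fin 2) (Fin 2) ℤ) : Prop :=
  2 ≤ M 0 0 ∧ 1 ≤ M 0 1 ∧ 1 ≤ M 1 0 ∧ 1 ≤ M 1 1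

lemma stmtP_mul {M N : Matrix (Fin 2) (Fin 2) ℤ} (hM : stmtP M) (hN : stmtP N) :
    stmtP (M * N) := by
  obtain ⟨a1, b1, c1, d1⟩ := hM
  obtain ⟨a2, b2, c2, d2⟩ := hN
  refine ⟨?_, ?_, ?_, ?_⟩ <;>
    simp only [Matrix.mul_apply, Fin.sum_univ_two] <;> nlinarith

lemma stmtP_prod (L : List (Matrix.SpecialLinearGroup (Fin 2) ℤ))
    (h : ∀ M ∈ L, stmtP (M : Matrix (Fin 2) (Fin 2) ℤ)) (hne : L ≠ []) :
    stmtP ((L.prod : Matrix.SpecialLinearGroup (Fin 2) ℤ) : Matrix (Fin 2) (Fin 2) ℤ) := by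
  induction L with
  | nil => exact absurd rfl hne
  | cons x xs ih =>
    rcases eq_or_ne xs [] with rfl | hxs
    · simpa using h x (by simp)
    · have := ih (fun M hM => h M (List.mem_cons_of_mem _ hM)) hxs
      rw [List.prod_cons, Matrix.SpecialLinearGroup.coe_mul]
      exact stmtP_mul (h x (by simp)) this

lemma pow_upper (k : ℤ) (q : ℕ) : (!![1, k; 0, 1] : Matrix (Fin 2) (Fin 2) ℤ) ^ q
    = !![1, k * q; 0, 1] := by
  induction q with
  | zero => simp [Matrix.one_fin_two]
  | succ m ih =>
    rw [pow_succ, ih]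
    push_cast
    rw [Matrix.mul_fin_two]
    congr 1 <;> ring

lemma pow_lower (k : ℤ) (q : ℕ) : (!![1, 0; k, 1] : Matrix (Fin 2) (Fin 2) ℤ) ^ q
    = !![1, 0; k * q, 1] := by
  induction q with
  | zero => simp [Matrix.one_fin_two]
  | succ m ih =>
    rw [pow_succ, ih]
    push_cast
    rw [Matrix.mul_fin_two]
    congr 1 <;> ring

/-- For `A = [[1,k],[0,1]]`, `B = [[1,0],[-k,1]]` in `SL₂(ℤ)` with `k ≥ 2`, and
positive integers `q₁,…,qₙ` (n ≥ 1), the product `A^{q₁} B^{-q₁} ⋯ A^{qₙ} B^{-qₙ}`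
has trace of absolute value strictly greater than 2 (it is hyperbolic). -/
theorem stmt_1 (k : ℤ) (hk : 2 ≤ k)
    (A B : Matrix.SpecialLinearGroup (Fin 2) ℤ)
    (hA : (A : Matrix (Fin 2) (Fin 2) ℤ) = !![1, k; 0, 1])
    (hB : (B : Matrix (Fin 2) (Fin 2) ℤ) = !![1, 0; -k, 1])
    (n : ℕ) (hn : 1 ≤ n) (q : Fin n → ℕ) (hq : ∀ i, 1 ≤ q i) :
    2 < |Matrix.trace
      (((List.ofFn fun i => A ^ (q i) * (B⁻¹) ^ (q i)).prod :
          Matrix.SpecialLinearGroup (Fin 2) ℤ) : Matrix (Fin 2) (Fin 2) ℤ)| := by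
  have hBinv : ((B⁻¹ : Matrix.SpecialLinearGroup (Fin 2) ℤ) : Matrix (Fin 2) (Fin 2) ℤ)
      = !![1, 0; k, 1] := by
    rw [Matrix.SpecialLinearGroup.coe_inv, hB, Matrix.adjugate_fin_two]
    norm_num
  have hfac : ∀ i : Fin n,
      stmtP ((A ^ (q i) * (B⁻¹) ^ (q i) : Matrix.SpecialLinearGroup (Fin 2) ℤ) :
        Matrix (Fin 2) (Fin 2) ℤ) := by
    intro i
    have hqi : (1 : ℤ) ≤ (q i : ℤ) := by exact_mod_cast hq i
    rw [Matrix.SpecialLinearGroup.coe_mul, Matrix.SpecialLinearGroup.coe_pow,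
      Matrix.SpecialLinearGroup.coe_pow, hA, hBinv, pow_upper, pow_lower,
      Matrix.mul_fin_two]
    have hkq : (2 : ℤ) ≤ k * (q i) := by nlinarith
    refine ⟨?_, ?_, ?_, ?_⟩ <;> simp <;> nlinarith [hkq]
  have hne : (List.ofFn fun i => A ^ (q i) * (B⁻¹) ^ (q i)) ≠ [] := by
    simp [List.ofFn_eq_nil_iff]
    omega
  have hP := stmtP_prod _ (by
    intro M hM
    rw [List.mem_ofFn] at hM
    obtain ⟨i, rfl⟩ := hM
    exact hfac i) hne
  obtain ⟨ha, hb, hc, hd⟩ := hP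
  rw [Matrix.trace_fin_two]
  rw [abs_of_pos (by linarith)]
  linarith
end

section
/- Let k ≥ 2 be an integer. The matrices A = [[1,k],[0,1]] and B = [[1,0],[-k,1]] generate a free subgroup of rank 2 in SL₂(ℝ). -/
/-!
`A` translates `ℍ` by `k ≥ 2`, and `B` translates by `k` in the coordinate `-1/z`. Ping-pong with
the potentials `Re z` and `Re (-1/z)`: each generator raises its own potential by at least `2`, and
the two potentials cannot both have absolute value `≥ 1`, since `|Re z| ≥ 1` forces
`|Re (-1/z)| = |Re z| / |z|² < 1`.
-/

open UpperHalfPlane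
open scoped MatrixGroups

universe u

lemma add_mul_le_apply_pow_smul {G α : Type*} [Monoid G] [MulAction G α] {φ : α → ℝ} {g : G}
    {c : ℝ} (hg : ∀ x, φ x + c ≤ φ (g • x)) (n : ℕ) (x : α) : φ x + n * c ≤ φ (g ^ n • x) := by
  induction n with
  | zero => simp
  | succ n ih =>
    rw [pow_succ', mul_smul]
    push_cast
    linarith [hg (g ^ n • x)]

namespace FreeGroup

theorem injective_lift_of_add_two_le_apply_smul {ι G : Type u} {α : Type*} [Nontrivial ι]
    [Group G] [MulAction G α] [Nonempty α] (a : ι → G) (φ : ι → α → ℝ)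
    (hφ : ∀ i x, φ i x + 2 ≤ φ i (a i • x))
    (hsep : ∀ i j, i ≠ j → ∀ x, |φ i x| < 1 ∨ |φ j x| < 1) :
    Function.Injective (FreeGroup.lift a) := by
  set X : ι → Set α := fun i => {x | 1 ≤ φ i x}
  set Y : ι → Set α := fun i => {x | φ i x ≤ -1}
  have one_le_abs {i x} (hx : x ∈ X i ∪ Y i) : 1 ≤ |φ i x| :=
    le_abs'.2 (hx.elim Or.inr Or.inl)
  have disjoint_of_ne {i j} (hij : i ≠ j) {s t : Set α} (hs : s ⊆ X i ∪ Y i)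
      (ht : t ⊆ X j ∪ Y j) : Disjoint s t :=
    Set.disjoint_left.2 fun x hxs hxt => (hsep i j hij x).elim
      (fun h => h.not_ge (one_le_abs (hs hxs))) (fun h => h.not_ge (one_le_abs (ht hxt)))
  refine injective_lift_of_ping_pong a X Y ?_ ?_ ?_ ?_ ?_ ?_
  · intro i
    obtain ⟨x⟩ := ‹Nonempty α›
    obtain ⟨n, hn⟩ := exists_nat_ge (1 - φ i x)
    refine ⟨a i ^ n • x, show 1 ≤ φ i (a i ^ n • x) from ?_⟩
    linarith [add_mul_le_apply_pow_smul (hφ i) n x]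
  · exact fun i j hij => disjoint_of_ne hij Set.subset_union_left Set.subset_union_left
  · exact fun i j hij => disjoint_of_ne hij Set.subset_union_right Set.subset_union_right
  · intro i j
    rcases eq_or_ne i j with rfl | hij
    · exact Set.disjoint_left.2 fun x (hX : 1 ≤ φ i x) (hY : φ i x ≤ -1) => by linarith
    · exact disjoint_of_ne hij Set.subset_union_left Set.subset_union_right
  · rintro i _ ⟨x, hx, rfl⟩
    replace hx : -1 < φ i x := not_le.1 hx
    show 1 ≤ φ i (a i • x)
    linarith [hφ i x]
  · rintro i _ ⟨x, hx, rfl⟩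
    replace hx : φ i x < 1 := not_le.1 hx
    have := hφ i ((a i)⁻¹ • x)
    rw [smul_inv_smul] at this
    show φ i ((a i)⁻¹ • x) ≤ -1
    linarith

end FreeGroup

namespace UpperHalfPlane

lemma coe_smul_of_eq_upper_unitriangular {g : SL(2, ℝ)} {t : ℝ}
    (hg : (g : Matrix (Fin 2) (Fin 2) ℝ) = !![1, t; 0, 1]) (z : ℍ) :
    ((g • z : ℍ) : ℂ) = z + t := by
  simp [specialLinearGroup_apply, hg]

lemma neg_inv_coe_smul_of_eq_lower_unitriangular {g : SL(2, ℝ)} {t : ℝ}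
    (hg : (g : Matrix (Fin 2) (Fin 2) ℝ) = !![1, 0; -t, 1]) (z : ℍ) :
    -((g • z : ℍ) : ℂ)⁻¹ = -(z : ℂ)⁻¹ + t := by
  have hden : -(t : ℂ) * z + 1 ≠ 0 := by
    simpa using linear_ne_zero (cd := ![-t, 1]) z (by simp)
  simp only [specialLinearGroup_apply, Algebra.algebraMap_self, hg, Matrix.of_apply,
    Matrix.cons_val', Matrix.cons_val_zero, Matrix.cons_val_fin_one, Real.ringHom_apply,
    Complex.ofReal_one, one_mul, Matrix.cons_val_one, Complex.ofReal_zero, add_zero,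
    Complex.ofReal_neg, neg_mul, inv_div]
  field_simp [z.ne_zero]
  ring

lemma abs_re_lt_one_or_abs_re_neg_inv_lt_one (z : ℍ) :
    |z.re| < 1 ∨ |(-(z : ℂ)⁻¹).re| < 1 := by
  refine or_iff_not_imp_left.2 fun hz => ?_
  have hnormSq : |z.re| ^ 2 < Complex.normSq z := by
    rw [Complex.normSq_apply, coe_re, coe_im, sq_abs]
    nlinarith [z.im_pos]
  rw [Complex.neg_re, abs_neg, Complex.inv_re, abs_div, coe_re,
    abs_of_pos (Complex.normSq_pos.2 z.ne_zero), div_lt_one (Complex.normSq_pos.2 z.ne_zero)]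
  nlinarith

end UpperHalfPlane

/-- For an integer `k ≥ 2`, the matrices `A = [[1,k],[0,1]]` and `B = [[1,0],[-k,1]]`
generate a free subgroup of rank 2 in `SL₂(ℝ)`: the homomorphism from the free group
on two generators sending the generators to `A` and `B` is injective. -/
theorem stmt_2 (k : ℤ) (hk : 2 ≤ k)
    (A B : Matrix.SpecialLinearGroup (Fin 2) ℝ)
    (hA : (A : Matrix (Fin 2) (Fin 2) ℝ) = !![1, (k : ℝ); 0, 1])
    (hB : (B : Matrix (Fin 2) (Fin 2) ℝ) = !![1, 0; -(k : ℝ), 1]) :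
    Function.Injective
      (FreeGroup.lift (![A, B] : Fin 2 → Matrix.SpecialLinearGroup (Fin 2) ℝ)) := by
  have hk2 : (2 : ℝ) ≤ k := by exact_mod_cast hk
  refine FreeGroup.injective_lift_of_add_two_le_apply_smul _
    ![fun z : ℍ => z.re, fun z => (-(z : ℂ)⁻¹).re] ?_ ?_
  · intro i z
    fin_cases i
    · change z.re + 2 ≤ (A • z).re
      rw [← coe_re, ← coe_re, coe_smul_of_eq_upper_unitriangular hA, Complex.add_re,
        Complex.ofReal_re]
      linarith
    · change (-(z : ℂ)⁻¹).re + 2 ≤ (-((B • z : ℍ) : ℂ)⁻¹).re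
      rw [neg_inv_coe_smul_of_eq_lower_unitriangular hB, Complex.add_re, Complex.ofReal_re]
      linarith
  · intro i j hij z
    fin_cases i <;> fin_cases j
    exacts [absurd rfl hij, abs_re_lt_one_or_abs_re_neg_inv_lt_one z,
      (abs_re_lt_one_or_abs_re_neg_inv_lt_one z).symm, absurd rfl hij]
end

section
/- Let F be a free group on generators a, b. For n-tuples (q₁,…,qₙ) of positive integers, the element ψ_{(q₁,…,qₙ)} = a^{q₁} b^{-q₁} ⋯ a^{qₙ} b^{-qₙ} determines the tuple (q₁,…,qₙ) uniquely up to cyclic permutation among all elements conjugate to it of this form with the same n; in particular two such elements ψ_{(q₁,…,qₙ)} and ψ_{(q'₁,…,q'ₙ)} are conjugate in F if and only if (q'₁,…,q'ₙ) is a cyclic permutation of (q₁,…,qₙ). -/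
/-!
Every letter of the word `a^{q₁} b^{-q₁} ⋯ a^{qₙ} b^{-qₙ}` is `a` or `b⁻¹`, and no two of these
cancel, so `ψ` is represented by a cyclically reduced word. Conjugate cyclically reduced words in a
free group are rotations of each other. A rotation taking one word of this shape to another must
cut it at a junction `b⁻¹ a`, so splitting both words into their maximal blocks `a^q b^{-q}`
turns the rotation of words into a rotation of the tuples. Conversely `xy` and `yx` are conjugate.
-/

namespace List
variable {α : Type*}

theorem IsRotated.splitBy {r : α → α → Bool} {l l' : List α} (h : l ~r l')
    (hl : ∀ x ∈ l.getLast?, ∀ y ∈ l.head?, r x y = false)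
    (hl' : ∀ x ∈ l'.getLast?, ∀ y ∈ l'.head?, r x y = false) :
    l.splitBy r ~r l'.splitBy r := by
  obtain ⟨n, rfl⟩ := h
  obtain ⟨u, v, rfl, hrot⟩ : ∃ u v, l = u ++ v ∧ l.rotate n = v ++ u :=
    ⟨_, _, (take_append_drop _ _).symm, rotate_eq_drop_append_take_mod⟩
  rw [hrot] at hl' ⊢
  rw [splitBy_append fun x hx y hy => hl' x (mem_getLast?_append_of_mem_getLast? hx) y
      (mem_head?_append_of_mem_head? hy),
    splitBy_append fun x hx y hy => hl x (mem_getLast?_append_of_mem_getLast? hx) y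
      (mem_head?_append_of_mem_head? hy)]
  exact isRotated_append

theorem isRotated_of_isRotated_map {β : Type*} {f : α → β} (hf : Function.Injective f)
    {l l' : List α} (h : l.map f ~r l'.map f) : l ~r l' := by
  obtain ⟨n, hn⟩ := h
  exact ⟨n, (map_injective_iff.mpr hf) (by rwa [map_rotate])⟩

theorem IsRotated.isConj_prod {G : Type*} [Group G] {l l' : List G} (h : l ~r l') :
    IsConj l.prod l'.prod := by
  obtain ⟨n, rfl⟩ := h
  obtain ⟨u, v, rfl, hrot⟩ : ∃ u v, l = u ++ v ∧ l.rotate n = v ++ u :=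
    ⟨_, _, (take_append_drop _ _).symm, rotate_eq_drop_append_take_mod⟩
  rw [hrot, prod_append, prod_append, isConj_iff]
  exact ⟨u.prod⁻¹, by group⟩

end List

open List

namespace FreeGroup
variable {α : Type*}

theorem isCyclicallyReduced_iff_cycle_chain {L : List (α × Bool)} :
    IsCyclicallyReduced L ↔
      Cycle.Chain (fun a b => a.1 = b.1 → a.2 = b.2) (L : Cycle (α × Bool)) := by
  cases L with
  | nil => simp
  | cons a l =>
    rw [Cycle.chain_coe_cons, ← cons_append, isChain_append, isCyclicallyReduced_iff]
    simp [IsReduced]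

theorem IsCyclicallyReduced.isRotated {L L' : List (α × Bool)} (h : IsCyclicallyReduced L)
    (hL : L ~r L') : IsCyclicallyReduced L' := by
  rwa [isCyclicallyReduced_iff_cycle_chain, ← Cycle.coe_eq_coe.mpr hL,
    ← isCyclicallyReduced_iff_cycle_chain]

theorem IsReduced.invRev {L : List (α × Bool)} (h : IsReduced L) : IsReduced (invRev L) := by
  simp only [IsReduced, FreeGroup.invRev, isChain_reverse, isChain_map]
  exact h.imp fun a b hab hba => by simpa using (hab hba.symm).symm

theorem not_isCyclicallyReduced_append_invRev {w v : List (α × Bool)} (hw : w ≠ []) :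
    ¬ IsCyclicallyReduced (w ++ v ++ invRev w) := by
  obtain ⟨a, w, rfl⟩ := exists_cons_of_ne_nil hw
  intro h
  have := h.2 (a.1, !a.2) (by rw [invRev_cons, ← append_assoc]; exact getLast?_concat)
    a (by simp) rfl
  simp at this

theorem isReduced_append_append_invRev {w u : List (α × Bool)} {c : α × Bool}
    (hw : IsReduced (w ++ [c])) (hu : IsReduced u) (hu₀ : u ≠ [])
    (hhead : ∀ d ∈ u.head?, c ≠ (d.1, !d.2)) (hlast : ∀ e ∈ u.getLast?, c ≠ e) :
    IsReduced (w ++ [c] ++ u ++ invRev (w ++ [c])) := by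
  unfold IsReduced
  rw [isChain_append, isChain_append]
  refine ⟨⟨hw, hu, fun c' hc d hd hcd => ?_⟩, hw.invRev, fun e he b hb => ?_⟩
  · rw [getLast?_concat, Option.mem_some_iff] at hc
    subst hc
    by_contra hne
    exact hhead d hd (Prod.ext hcd (Bool.eq_not.mpr hne))
  rw [invRev_append] at hb
  rw [getLast?_append_of_ne_nil _ hu₀] at he
  simp only [FreeGroup.invRev, map_cons, map_nil, reverse_cons, reverse_nil, nil_append,
    head?_append, head?_cons, Option.some_or, Option.mem_def, Option.some.injEq] at hb
  subst hb
  have hec := (hlast e he).symm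
  obtain ⟨e₁, e₂⟩ := e
  obtain ⟨c₁, c₂⟩ := c
  rintro rfl
  cases e₂ <;> cases c₂ <;> simp_all

theorem mul_mk_cons (a : α × Bool) (L : List (α × Bool)) : mk [a] * mk L = mk (a :: L) :=
  mul_mk

theorem mk_replicate (x : α × Bool) (n : ℕ) : mk (replicate n x) = mk [x] ^ n := by
  rw [pow_mk, flatten_replicate_singleton]

variable [DecidableEq α]

theorem isRotated_toWord_of_eq_conj {w : List (α × Bool)} (hw : IsReduced w) {x y : FreeGroup α}
    (hx : IsCyclicallyReduced x.toWord) (hy : IsCyclicallyReduced y.toWord)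
    (h : y = mk w * x * (mk w)⁻¹) : x.toWord ~r y.toWord := by
  induction w using List.reverseRecOn generalizing x with
  | nil => simp [h, ← one_eq_mk, IsRotated.refl]
  | append_singleton w c ih =>
    -- Conjugating `x` by the last letter `c` of the conjugator rotates `x.toWord` when `c` cancels
    -- against its first letter or equals its last one; otherwise `y.toWord` is
    -- `w ++ [c] ++ x.toWord ++ invRev (w ++ [c])`, whose ends cancel.
    have hconj : y = mk w * (mk [c] * x * (mk [c])⁻¹) * (mk w)⁻¹ := by
      rw [h, ← mul_mk]; group
    have of_rotation : ∀ L, x.toWord ~r L → mk [c] * x * (mk [c])⁻¹ = mk L →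
        x.toWord ~r y.toWord := by
      intro L hr hL
      have hrot := hx.isRotated hr
      have hL' : (mk L).toWord = L := by rw [toWord_mk, hrot.isReduced.reduce_eq]
      rw [← hL'] at hr hrot
      exact hr.trans (ih (hw.infix ⟨[], [c], by simp⟩) hrot (by rw [hconj, hL]))
    by_cases hu₀ : x.toWord = []
    · rw [toWord_eq_nil_iff] at hu₀
      rw [h, hu₀, mul_one, mul_inv_cancel, toWord_one]
    obtain ⟨d, t, hu⟩ := exists_cons_of_ne_nil hu₀
    have hxu : x = mk (d :: t) := by rw [← hu, mk_toWord]
    rw [hu] at of_rotation hx ⊢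
    by_cases hcd : c = (d.1, !d.2)
    · refine of_rotation (t ++ [d]) IsRotated.cons_append_singleton ?_
      have hc : mk [c] = (mk [d])⁻¹ := by rw [inv_mk]; simp [FreeGroup.invRev, hcd]
      rw [hc, hxu, ← mul_mk_cons d t, ← mul_mk (L₁ := t)]
      group
    obtain ⟨s, e, hse⟩ : ∃ s e, d :: t = s ++ [e] :=
      (eq_nil_or_concat' (d :: t)).resolve_left (cons_ne_nil d t)
    by_cases hce : c = e
    · rw [hse] at of_rotation ⊢
      refine of_rotation (e :: s) (isRotated_concat e s) ?_
      rw [hxu, hse, hce, ← mul_mk (L₁ := s), ← mul_mk_cons e s]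
      group
    have hyw : y.toWord = w ++ [c] ++ d :: t ++ invRev (w ++ [c]) := by
      rw [h, hxu, inv_mk, mul_mk, mul_mk, toWord_mk]
      exact (isReduced_append_append_invRev hw hx.isReduced (cons_ne_nil d t) (by simpa using hcd)
        (by rw [hse]; simpa using hce)).reduce_eq
    exact absurd (hyw ▸ hy) (not_isCyclicallyReduced_append_invRev (by simp))

theorem IsCyclicallyReduced.isRotated_of_isConj {x y : FreeGroup α}
    (hx : IsCyclicallyReduced x.toWord) (hy : IsCyclicallyReduced y.toWord) (h : IsConj x y) :
    x.toWord ~r y.toWord := by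
  obtain ⟨g, rfl⟩ := isConj_iff.mp h
  exact isRotated_toWord_of_eq_conj isReduced_toWord hx hy (by rw [mk_toWord])

end FreeGroup

open FreeGroup

def psiBlock (q : ℕ) : List (Fin 2 × Bool) := replicate q (0, true) ++ replicate q (1, false)

def psiWord (l : List ℕ) : List (Fin 2 × Bool) := (l.map psiBlock).flatten

/-- On the letters `a = (0, true)` and `b⁻¹ = (1, false)`, false exactly at a junction `b⁻¹ a`. -/
def sameBlock (x y : Fin 2 × Bool) : Bool := x.2 || !y.2

theorem psiBlock_injective : Function.Injective psiBlock := fun p q h => by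
  have := congrArg length h
  simp only [psiBlock, length_append, length_replicate] at this
  omega

theorem psiBlock_ne_nil {q : ℕ} (hq : 0 < q) : psiBlock q ≠ [] := by
  simp [psiBlock, hq.ne']

theorem mem_psiWord {l : List ℕ} {x : Fin 2 × Bool} (hx : x ∈ psiWord l) :
    x = (0, true) ∨ x = (1, false) := by
  simp only [psiWord, psiBlock, mem_flatten, mem_map] at hx
  obtain ⟨_, ⟨q, -, rfl⟩, hx⟩ := hx
  simp only [mem_append, mem_replicate] at hx
  exact hx.imp And.right And.right

theorem head?_psiBlock (q : ℕ) : ∀ x ∈ (psiBlock q).head?, x = (0, true) := by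
  cases q <;> simp [psiBlock, head?_append, head?_replicate]

theorem getLast?_psiBlock (q : ℕ) : ∀ x ∈ (psiBlock q).getLast?, x = (1, false) := by
  cases q <;> simp [psiBlock, getLast?_append, getLast?_replicate]

theorem isChain_psiBlock (q : ℕ) : (psiBlock q).IsChain fun x y => sameBlock x y := by
  rw [psiBlock, isChain_append]
  refine ⟨isChain_replicate_of_rel _ rfl, isChain_replicate_of_rel _ rfl, fun x hx y _ => ?_⟩
  obtain rfl := eq_of_mem_replicate (mem_of_mem_getLast? hx)
  rfl

theorem sameBlock_getLast?_head?_psiWord (l : List ℕ) :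
    ∀ x ∈ (psiWord l).getLast?, ∀ y ∈ (psiWord l).head?, sameBlock x y = false := by
  intro x hx y hy
  rw [psiWord, getLast?_flatten] at hx
  rw [psiWord, head?_flatten] at hy
  obtain ⟨_, hm, hx⟩ := exists_of_findSome?_eq_some hx
  obtain ⟨_, hm', hy⟩ := exists_of_findSome?_eq_some hy
  obtain ⟨q, -, rfl⟩ := mem_map.mp (mem_reverse.mp hm)
  obtain ⟨r, -, rfl⟩ := mem_map.mp hm'
  rw [getLast?_psiBlock q x hx, head?_psiBlock r y hy]
  rfl

theorem isCyclicallyReduced_psiWord (l : List ℕ) : IsCyclicallyReduced (psiWord l) := by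
  rw [isCyclicallyReduced_iff_cycle_chain]
  refine Cycle.chain_of_pairwise fun x hx y hy => ?_
  rcases mem_psiWord (Cycle.mem_coe_iff.mp hx) with rfl | rfl <;>
    rcases mem_psiWord (Cycle.mem_coe_iff.mp hy) with rfl | rfl <;> decide

theorem mk_psiBlock (q : ℕ) : mk (psiBlock q) = of 0 ^ q * (of 1)⁻¹ ^ q := by
  rw [psiBlock, ← mul_mk, mk_replicate, mk_replicate]
  rfl

theorem prod_map_eq_mk_psiWord (l : List ℕ) :
    (l.map fun q => (of (0 : Fin 2)) ^ q * (of (1 : Fin 2))⁻¹ ^ q).prod = mk (psiWord l) := by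
  induction l with
  | nil => rfl
  | cons q l ih => rw [map_cons, prod_cons, ih, ← mk_psiBlock, mul_mk]; rfl

theorem splitBy_psiWord {l : List ℕ} (hl : ∀ q ∈ l, 0 < q) :
    (psiWord l).splitBy sameBlock = l.map psiBlock := by
  refine splitBy_flatten ?_ (by simpa using fun q _ => isChain_psiBlock q) ?_
  · exact fun h => by
      obtain ⟨q, hq, h₀⟩ := mem_map.mp h
      exact psiBlock_ne_nil (hl q hq) h₀
  · rw [isChain_map]
    refine (pairwise_of_forall_mem_list fun q hq r hr => ?_).isChain
    refine ⟨psiBlock_ne_nil (hl q hq), psiBlock_ne_nil (hl r hr), ?_⟩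
    rw [getLast?_psiBlock q _ (getLast_mem_getLast? _), head?_psiBlock r _ (head_mem_head? _)]
    rfl

theorem toWord_mk_psiWord (l : List ℕ) : (mk (psiWord l)).toWord = psiWord l := by
  rw [toWord_mk, (isCyclicallyReduced_psiWord l).isReduced.reduce_eq]

theorem isRotated_of_isRotated_psiWord {l l' : List ℕ} (hl : ∀ q ∈ l, 0 < q)
    (hl' : ∀ q ∈ l', 0 < q)
    (h : psiWord l ~r psiWord l') : l ~r l' := by
  have := h.splitBy (sameBlock_getLast?_head?_psiWord l) (sameBlock_getLast?_head?_psiWord l')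
  rw [splitBy_psiWord hl, splitBy_psiWord hl'] at this
  exact isRotated_of_isRotated_map psiBlock_injective this

theorem stmt_3_general (a b : FreeGroup (Fin 2))
    (ha : a = FreeGroup.of 0) (hb : b = FreeGroup.of 1)
    (ψ : List ℕ → FreeGroup (Fin 2))
    (hψ : ∀ l : List ℕ, ψ l = (l.map fun q => a ^ q * (b⁻¹) ^ q).prod)
    (l l' : List ℕ)
    (hpos : ∀ q ∈ l, 1 ≤ q) (hpos' : ∀ q ∈ l', 1 ≤ q) :
    IsConj (ψ l) (ψ l') ↔ ∃ m : ℕ, l' = l.rotate m := by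
  subst ha hb
  refine ⟨fun h => ?_, fun ⟨m, hm⟩ => ?_⟩
  · rw [hψ, hψ, prod_map_eq_mk_psiWord, prod_map_eq_mk_psiWord] at h
    have hrot := IsCyclicallyReduced.isRotated_of_isConj
      (by rw [toWord_mk_psiWord]; exact isCyclicallyReduced_psiWord l)
      (by rw [toWord_mk_psiWord]; exact isCyclicallyReduced_psiWord l') h
    rw [toWord_mk_psiWord, toWord_mk_psiWord] at hrot
    obtain ⟨m, hm⟩ := isRotated_of_isRotated_psiWord hpos hpos' hrot
    exact ⟨m, hm.symm⟩
  · rw [hψ, hψ, hm, map_rotate]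
    exact IsRotated.isConj_prod ⟨m, rfl⟩

/-- In the free group on two generators `a, b`, for tuples of positive integers
`(q₁,…,qₙ)` the elements `ψ = a^{q₁} b^{-q₁} ⋯ a^{qₙ} b^{-qₙ}` (same length `n ≥ 1`)
are conjugate if and only if one tuple is a cyclic permutation of the other. -/
theorem stmt_3 (a b : FreeGroup (Fin 2))
    (ha : a = FreeGroup.of 0) (hb : b = FreeGroup.of 1)
    (ψ : List ℕ → FreeGroup (Fin 2))
    (hψ : ∀ l : List ℕ, ψ l = (l.map fun q => a ^ q * (b⁻¹) ^ q).prod)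
    (n : ℕ) (hn : 1 ≤ n) (l l' : List ℕ)
    (hl : l.length = n) (hl' : l'.length = n)
    (hpos : ∀ q ∈ l, 1 ≤ q) (hpos' : ∀ q ∈ l', 1 ≤ q) :
    IsConj (ψ l) (ψ l') ↔ ∃ m : ℕ, l' = l.rotate m :=
  stmt_3_general a b ha hb ψ hψ l l' hpos hpos'
end
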